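/- Prenexing an existential quantifier through an arbitrary boolean context: let ψ and φ be QBFs, let p be a variable occurring in ψ but not free in φ and not in the scope of any quantifier in ψ, let Y ⊆ vars(ψ) \ vars(φ), let X⁻ = {x⁻ : x ∈ X} and X⁺ = {x⁺ : x ∈ X} be fresh, and let σ rename each x ∈ X to x⁺. Then ∃Y (ψ[p/∃X φ]) is logically equivalent to ∀X⁻ ∃(Y ∪ X⁺ ∪ {p}) (ψ ∧ (p ↔ φ[σ]) ∧ ⋀_{x∈X} (¬p → (x⁺ ↔ x⁻))). -/

import Mathlib

/-- Syntax of full quantified boolean formulas. -/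
inductive Fml : Type where
  | var : ℕ → Fml
  | tru : Fml
  | fls : Fml
  | neg : Fml → Fml
  | conj : Fml → Fml → Fml
  | disj : Fml → Fml → Fml
  | imp : Fml → Fml → Fml
  | biff : Fml → Fml → Fml
  | qex : Finset ℕ → Fml → Fml
  | qall : Finset ℕ → Fml → Fml
  deriving DecidableEq

namespace Fml

/-- Satisfaction of a formula by a valuation. -/
def Sat : (ℕ → Bool) → Fml → Prop
  | V, var p => V p = true
  | _, tru => True
  | _, fls => False
  | V, neg φ => ¬ Sat V φ
  | V, conj φ ψ => Sat V φ ∧ Sat V ψ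
  | V, disj φ ψ => Sat V φ ∨ Sat V ψ
  | V, imp φ ψ => Sat V φ → Sat V ψ
  | V, biff φ ψ => (Sat V φ ↔ Sat V ψ)
  | V, qex X φ => ∃ W : ℕ → Bool, (∀ q ∉ X, W q = V q) ∧ Sat W φ
  | V, qall X φ => ∀ W : ℕ → Bool, (∀ q ∉ X, W q = V q) → Sat W φ

/-- Logical equivalence: same truth value under every valuation. -/
def Equiv (φ ψ : Fml) : Prop := ∀ V : ℕ → Bool, Sat V φ ↔ Sat V ψ

/-- All variables occurring (free or bound, including quantifier blocks). -/
def vars : Fml → Finset ℕ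
  | var p => {p}
  | tru => ∅
  | fls => ∅
  | neg φ => vars φ
  | conj φ ψ => vars φ ∪ vars ψ
  | disj φ ψ => vars φ ∪ vars ψ
  | imp φ ψ => vars φ ∪ vars ψ
  | biff φ ψ => vars φ ∪ vars ψ
  | qex X φ => X ∪ vars φ
  | qall X φ => X ∪ vars φ

/-- Free variables. -/
def freeVars : Fml → Finset ℕ
  | var p => {p}
  | tru => ∅
  | fls => ∅
  | neg φ => freeVars φ
  | conj φ ψ => freeVars φ ∪ freeVars ψ
  | disj φ ψ => freeVars φ ∪ freeVars ψ
  | imp φ ψ => freeVars φ ∪ freeVars ψ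
  | biff φ ψ => freeVars φ ∪ freeVars ψ
  | qex X φ => freeVars φ \ X
  | qall X φ => freeVars φ \ X

/-- Bound variables. -/
def boundVars : Fml → Finset ℕ
  | var _ => ∅
  | tru => ∅
  | fls => ∅
  | neg φ => boundVars φ
  | conj φ ψ => boundVars φ ∪ boundVars ψ
  | disj φ ψ => boundVars φ ∪ boundVars ψ
  | imp φ ψ => boundVars φ ∪ boundVars ψ
  | biff φ ψ => boundVars φ ∪ boundVars ψ
  | qex X φ => X ∪ boundVars φ
  | qall X φ => X ∪ boundVars φ

/-- Substitution of `ρ` for free occurrences of the variable `p`. -/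
def subst (p : ℕ) (ρ : Fml) : Fml → Fml
  | var q => if q = p then ρ else var q
  | tru => tru
  | fls => fls
  | neg φ => neg (subst p ρ φ)
  | conj φ ψ => conj (subst p ρ φ) (subst p ρ ψ)
  | disj φ ψ => disj (subst p ρ φ) (subst p ρ ψ)
  | imp φ ψ => imp (subst p ρ φ) (subst p ρ ψ)
  | biff φ ψ => biff (subst p ρ φ) (subst p ρ ψ)
  | qex X φ => qex X (if p ∈ X then φ else subst p ρ φ)
  | qall X φ => qall X (if p ∈ X then φ else subst p ρ φ)

/-- Simultaneous substitution given by an association list. -/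
def simSubst (σ : List (ℕ × Fml)) : Fml → Fml
  | var q => ((σ.find? (fun e => e.1 == q)).map Prod.snd).getD (var q)
  | tru => tru
  | fls => fls
  | neg φ => neg (simSubst σ φ)
  | conj φ ψ => conj (simSubst σ φ) (simSubst σ ψ)
  | disj φ ψ => disj (simSubst σ φ) (simSubst σ ψ)
  | imp φ ψ => imp (simSubst σ φ) (simSubst σ ψ)
  | biff φ ψ => biff (simSubst σ φ) (simSubst σ ψ)
  | qex X φ => qex X (simSubst (σ.filter (fun e => decide (e.1 ∉ X))) φ)
  | qall X φ => qall X (simSubst (σ.filter (fun e => decide (e.1 ∉ X))) φ)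

/-- Conjunction of a list of formulas (`⊤` for the empty list). -/
def bigAnd : List Fml → Fml
  | [] => tru
  | [φ] => φ
  | φ :: rest => conj φ (bigAnd rest)

/-- Length of a formula: variables and operators count 1, except that
negation does not count; a block `QX` contributes `1 + |X|`. -/
def len : Fml → ℕ
  | var _ => 1
  | tru => 1
  | fls => 1
  | neg φ => len φ
  | conj φ ψ => 1 + len φ + len ψ
  | disj φ ψ => 1 + len φ + len ψ
  | imp φ ψ => 1 + len φ + len ψ
  | biff φ ψ => 1 + len φ + len ψ
  | qex X φ => 1 + X.card + len φ
  | qall X φ => 1 + X.card + len φ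

/-- Quantifier depth. -/
def md : Fml → ℕ
  | var _ => 0
  | tru => 0
  | fls => 0
  | neg φ => md φ
  | conj φ ψ => max (md φ) (md ψ)
  | disj φ ψ => max (md φ) (md ψ)
  | imp φ ψ => max (md φ) (md ψ)
  | biff φ ψ => max (md φ) (md ψ)
  | qex _ φ => 1 + md φ
  | qall _ φ => 1 + md φ

/-- Number of quantifier blocks. -/
def nb : Fml → ℕ
  | var _ => 0
  | tru => 0
  | fls => 0
  | neg φ => nb φ
  | conj φ ψ => nb φ + nb ψ
  | disj φ ψ => nb φ + nb ψ
  | imp φ ψ => nb φ + nb ψ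
  | biff φ ψ => nb φ + nb ψ
  | qex _ φ => 1 + nb φ
  | qall _ φ => 1 + nb φ

/-- Total number of quantified variables (sum of block sizes). -/
def nv : Fml → ℕ
  | var _ => 0
  | tru => 0
  | fls => 0
  | neg φ => nv φ
  | conj φ ψ => nv φ + nv ψ
  | disj φ ψ => nv φ + nv ψ
  | imp φ ψ => nv φ + nv ψ
  | biff φ ψ => nv φ + nv ψ
  | qex X φ => X.card + nv φ
  | qall X φ => X.card + nv φ

/-- Boolean (quantifier-free) formulas. -/
def isBool : Fml → Bool
  | var _ => true
  | tru => true
  | fls => true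
  | neg φ => isBool φ
  | conj φ ψ => isBool φ && isBool ψ
  | disj φ ψ => isBool φ && isBool ψ
  | imp φ ψ => isBool φ && isBool ψ
  | biff φ ψ => isBool φ && isBool ψ
  | qex _ _ => false
  | qall _ _ => false

/-- Prenex form: a prefix of quantifier blocks followed by a boolean formula. -/
def IsPrenex : Fml → Prop
  | qex _ φ => IsPrenex φ
  | qall _ φ => IsPrenex φ
  | φ => isBool φ = true

end Fml

/-- Quantifiers. -/
inductive Quant : Type where
  | qex : Quant
  | qall : Quant
  deriving DecidableEq

/-- The dual of a quantifier. -/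
def Quant.dual : Quant → Quant
  | .qex => .qall
  | .qall => .qex

/-- Applying a quantifier block to a formula. -/
def qApply : Quant → Finset ℕ → Fml → Fml
  | .qex, X, φ => Fml.qex X φ
  | .qall, X, φ => Fml.qall X φ

namespace Fml
/-- `p` is not in the scope of any quantifier of the formula
(no occurrence of `p` lies under a quantifier). -/
def OutsideQuantifiers (p : ℕ) : Fml → Prop
  | var _ => True
  | tru => True
  | fls => True
  | neg φ => OutsideQuantifiers p φ
  | conj φ ψ => OutsideQuantifiers p φ ∧ OutsideQuantifiers p ψ
  | disj φ ψ => OutsideQuantifiers p φ ∧ OutsideQuantifiers p ψ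
  | imp φ ψ => OutsideQuantifiers p φ ∧ OutsideQuantifiers p ψ
  | biff φ ψ => OutsideQuantifiers p φ ∧ OutsideQuantifiers p ψ
  | qex X φ => p ∉ X ∧ p ∉ vars φ
  | qall X φ => p ∉ X ∧ p ∉ vars φ
end Fml

/-!
Let `β` be the truth value of `∃X φ`; it does not depend on `Y`, `p`, `X⁺`, `X⁻`. Since `p` occurs
in `ψ` outside all quantifiers, the left side says that `ψ` with `p := β` is satisfiable over `Y`,
and so does the right side. When `∃X φ` holds, `p := true` with a witness for `X⁺` satisfies the
matrix whatever `X⁻` is, while a witness chosen for `X⁻` rules out `p` false, as `¬p` forces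
`X⁺ = X⁻`. When `∃X φ` fails, `p := false` with `X⁺ := X⁻` works and `p` true is impossible.
-/

theorem Set.InjOn.exists_comp_eq {α β γ : Type*} {g : α → β} {X : Set α} (hg : X.InjOn g)
    (u : α → γ) (V : β → γ) : ∃ W : β → γ, (∀ x ∈ X, W (g x) = u x) ∧ ∀ q ∉ g '' X, W q = V q :=
  ⟨Function.extend (X.domRestrict g) (X.domRestrict u) V,
    fun x hx => hg.injective.extend_apply _ _ ⟨x, hx⟩,
    fun _ hq => Function.extend_apply' _ _ _ fun ⟨x, hx⟩ => hq ⟨x, x.2, hx⟩⟩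

namespace Fml

variable {V W : ℕ → Bool} {p : ℕ} {X : Finset ℕ}

theorem freeVars_subset_vars (φ : Fml) : φ.freeVars ⊆ φ.vars := by
  induction φ <;> simp only [freeVars, vars] <;> grind

theorem sat_qex_iff {φ : Fml} : Sat V (qex X φ) ↔ ∃ u, Sat (X.piecewise u V) φ := by
  refine ⟨fun ⟨W, hW, hφ⟩ => ⟨W, ?_⟩,
    fun ⟨u, hu⟩ => ⟨_, fun q hq => X.piecewise_eq_of_notMem _ _ hq, hu⟩⟩
  convert hφ
  ext q
  by_cases hq : q ∈ X <;> simp [hq, hW]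

theorem sat_qall_iff {φ : Fml} : Sat V (qall X φ) ↔ ∀ u, Sat (X.piecewise u V) φ := by
  refine ⟨fun h u => h _ fun q hq => X.piecewise_eq_of_notMem _ _ hq, fun h W hW => ?_⟩
  convert h W
  ext q
  by_cases hq : q ∈ X <;> simp [hq, hW]

theorem sat_congr {φ : Fml} (h : ∀ q ∈ φ.freeVars, V q = W q) : Sat V φ ↔ Sat W φ := by
  induction φ generalizing V W with
  | var q => simp [Sat, h q (by simp [freeVars])]
  | tru | fls => rfl
  | neg φ ih => exact not_congr (ih h)
  | conj φ ψ ihφ ihψ | disj φ ψ ihφ ihψ | imp φ ψ ihφ ihψ | biff φ ψ ihφ ihψ =>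
    simp only [freeVars, Finset.mem_union] at h
    simp only [Sat, ihφ fun q hq => h q (.inl hq), ihψ fun q hq => h q (.inr hq)]
  | qex Z φ ih | qall Z φ ih =>
    have hZ (u : ℕ → Bool) : Sat (Z.piecewise u V) φ ↔ Sat (Z.piecewise u W) φ := by
      refine ih fun q hq => ?_
      by_cases hqZ : q ∈ Z
      · simp [hqZ]
      · simp [hqZ, h q (by simp [freeVars, hq, hqZ])]
    simp only [sat_qex_iff, sat_qall_iff, hZ]

theorem sat_update_of_notMem {φ : Fml} {b : Bool} (hp : p ∉ φ.freeVars) :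
    Sat (Function.update V p b) φ ↔ Sat V φ :=
  sat_congr fun q hq => Function.update_of_ne (by rintro rfl; exact hp hq) _ _

theorem subst_of_notMem_vars {ρ φ : Fml} (hp : p ∉ φ.vars) : subst p ρ φ = φ := by
  induction φ with
  | var q => simp_all [subst, vars, Ne.symm]
  | _ => simp_all [subst, vars]

theorem sat_subst {ρ ψ : Fml} {b : Bool} (hψ : OutsideQuantifiers p ψ) (hb : b = true ↔ Sat V ρ) :
    Sat V (subst p ρ ψ) ↔ Sat (Function.update V p b) ψ := by
  induction ψ with
  | var q =>
    by_cases hq : q = p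
    · subst hq; simp [subst, Sat, hb]
    · simp [subst, Sat, hq]
  | tru | fls => rfl
  | neg φ ih => exact not_congr (ih hψ)
  | conj φ ψ ihφ ihψ | disj φ ψ ihφ ihψ | imp φ ψ ihφ ihψ | biff φ ψ ihφ ihψ =>
    simp only [subst, Sat, ihφ hψ.1, ihψ hψ.2]
  | qex Z φ | qall Z φ =>
    obtain ⟨hpZ, hpφ⟩ := hψ
    rw [subst, if_neg hpZ, subst_of_notMem_vars hpφ, sat_update_of_notMem]
    exact fun hp => hpφ (freeVars_subset_vars _ (Finset.mem_sdiff.mp hp).1)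

theorem sat_bigAnd {l : List Fml} : Sat V (bigAnd l) ↔ ∀ χ ∈ l, Sat V χ := by
  induction l with
  | nil => simp [bigAnd, Sat]
  | cons χ l ih =>
    cases l with
    | nil => simp [bigAnd]
    | cons χ' l => simp only [bigAnd, Sat, ih, List.forall_mem_cons]

theorem sat_simSubst_rename {g : ℕ → ℕ} {φ : Fml} {L : List ℕ} (hg : ∀ x ∈ L, g x ∉ φ.vars) :
    Sat V (simSubst (L.map fun x => (x, var (g x))) φ) ↔
      Sat (fun q => if q ∈ L then V (g q) else V q) φ := by
  induction φ generalizing L V with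
  | var q =>
    cases h : L.find? (· == q) with
    | none =>
      have hq : q ∉ L := fun hq => by simpa using List.find?_eq_none.mp h q hq
      simp [simSubst, List.find?_map, h, Sat, hq]
    | some x =>
      obtain rfl : x = q := by simpa using List.find?_some h
      simp [simSubst, List.find?_map, h, Sat, List.mem_of_find?_eq_some h]
  | tru | fls => rfl
  | neg φ ih => exact not_congr (ih hg)
  | conj φ ψ ihφ ihψ | disj φ ψ ihφ ihψ | imp φ ψ ihφ ihψ | biff φ ψ ihφ ihψ =>
    simp only [vars, Finset.mem_union, not_or] at hg
    simp only [simSubst, Sat, ihφ fun x hx => (hg x hx).1, ihψ fun x hx => (hg x hx).2]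
  | qex Z φ ih | qall Z φ ih =>
    simp only [vars, Finset.mem_union, not_or] at hg
    have hZ (u : ℕ → Bool) :
        (fun q => if q ∈ L.filter (· ∉ Z) then Z.piecewise u V (g q) else Z.piecewise u V q) =
          Z.piecewise u (fun q => if q ∈ L then V (g q) else V q) := by
      ext q
      by_cases hqZ : q ∈ Z <;> by_cases hqL : q ∈ L <;> simp [hqZ, hqL, (hg q · |>.1)]
    have ih' (u : ℕ → Bool) := ih (V := Z.piecewise u V) (L := L.filter (· ∉ Z))
      fun x hx => (hg x (List.mem_of_mem_filter hx)).2
    simp only [simSubst, List.filter_map, Function.comp_def, sat_qex_iff, sat_qall_iff, ih', hZ]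

theorem sat_simSubst_rename_toList {g : ℕ → ℕ} {φ : Fml} (hg : ∀ x ∈ X, g x ∉ φ.vars) :
    Sat V (simSubst (X.toList.map fun x => (x, var (g x))) φ) ↔ Sat (X.piecewise (V ∘ g) V) φ := by
  rw [sat_simSubst_rename (by simpa using hg)]
  simp only [Finset.mem_toList]
  rfl

theorem exists_sat_piecewise_iff (φ : Fml) (u₀ : ℕ → Bool) :
    ∃ u, (Sat V (qex X φ) ↔ Sat (X.piecewise u V) φ) ∧ (¬Sat V (qex X φ) → u = u₀) := by
  by_cases h : Sat V (qex X φ)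
  · obtain ⟨u, hu⟩ := sat_qex_iff.mp h
    exact ⟨u, iff_of_true h hu, absurd h⟩
  · exact ⟨u₀, iff_of_false h fun hu => h (sat_qex_iff.mpr ⟨u₀, hu⟩), fun _ => rfl⟩

theorem sat_qex_subst_iff {Y : Finset ℕ} {ρ ψ : Fml} {b : Bool} (hψ : OutsideQuantifiers p ψ)
    (hY : ∀ q ∈ ρ.freeVars, q ∉ Y) (hb : b = true ↔ Sat V ρ) :
    Sat V (qex Y (subst p ρ ψ)) ↔ ∃ W₀, (∀ q ∉ Y, W₀ q = V q) ∧ Sat (Function.update W₀ p b) ψ :=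
  exists_congr fun _ => and_congr_right fun hW₀ =>
    sat_subst hψ (hb.trans (sat_congr fun q hq => (hW₀ q (hY q hq)).symm))

section Prenex

variable {ψ φ : Fml} {Y : Finset ℕ} {mp mn : ℕ → ℕ} {b : Bool}

theorem exists_sat_prenex_body_of_sat_update
    (hφ : ∀ q ∈ φ.freeVars, q ∉ X → q ∉ Y ∪ X.image mp ∪ {p} ∧ q ∉ X.image mn)
    (hψ : ∀ q ∈ ψ.vars, q ∉ X.image mp ∧ q ∉ X.image mn)
    (hmp : ∀ x ∈ X, mp x ∉ Y ∧ mp x ≠ p) (hmn : ∀ x ∈ X, mn x ∉ Y ∪ X.image mp ∪ {p})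
    (hinj : Set.InjOn mp X) (hb : b = true ↔ Sat V (qex X φ))
    {W₀ : ℕ → Bool} (hW₀ : ∀ q ∉ Y, W₀ q = V q) (hψW₀ : Sat (Function.update W₀ p b) ψ)
    {Wm : ℕ → Bool} (hWm : ∀ q ∉ X.image mn, Wm q = V q) :
    ∃ W, (∀ q ∉ Y ∪ X.image mp ∪ {p}, W q = Wm q) ∧ Sat W ψ ∧
      (W p = true ↔ Sat (X.piecewise (W ∘ mp) W) φ) ∧
      ∀ x ∈ X, ¬W p = true → (W (mp x) = true ↔ W (mn x) = true) := by
  -- `X⁺` takes a witness of `∃X φ` if there is one, and copies `X⁻` otherwise.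
  obtain ⟨u, hu, hu₀⟩ := exists_sat_piecewise_iff (V := V) (X := X) φ (Wm ∘ mn)
  obtain ⟨W₁, hW₁u, hW₁⟩ := hinj.exists_comp_eq u Wm
  set W := Function.update (Y.piecewise W₀ W₁) p b
  have hWu (x) (hx : x ∈ X) : W (mp x) = u x := by
    simp [W, (hmp x hx).2, (hmp x hx).1, hW₁u x hx]
  have hWm' (q) (hq : q ∉ Y ∪ X.image mp ∪ {p}) : W q = Wm q := by
    simp only [Finset.mem_union, Finset.mem_singleton, not_or] at hq
    simp [W, hq.2, hq.1.1, hW₁ q (by simpa using hq.1.2)]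
  refine ⟨W, hWm', ?_, ?_, fun x hx hWp => ?_⟩
  · refine (sat_congr fun q hq => ?_).mp hψW₀
    obtain ⟨hqmp, hqmn⟩ := hψ q (freeVars_subset_vars ψ hq)
    by_cases hqp : q = p
    · simp [W, hqp]
    by_cases hqY : q ∈ Y
    · simp [W, hqp, hqY]
    · simp [W, hqp, hqY, hW₁ q (by simpa using hqmp), hWm q hqmn, hW₀ q hqY]
  · rw [show W p = b from Function.update_self .., hb, hu]
    refine sat_congr fun q hq => ?_
    by_cases hqX : q ∈ X
    · simp [hqX, hWu q hqX]
    · obtain ⟨hqS, hqN⟩ := hφ q hq hqX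
      simp [hqX, hWm' q hqS, hWm q hqN]
  · have hu₀ := hu₀ (by simpa [W, ← hb] using hWp)
    rw [hWu x hx, hWm' _ (hmn x hx), hu₀, Function.comp_apply]

theorem exists_sat_update_of_forall_prenex_body
    (hφ : ∀ q ∈ φ.freeVars, q ∉ X → q ∉ Y ∪ X.image mp ∪ {p} ∧ q ∉ X.image mn)
    (hψ : ∀ q ∈ ψ.vars, q ∉ X.image mp ∧ q ∉ X.image mn)
    (hmn : ∀ x ∈ X, mn x ∉ Y ∪ X.image mp ∪ {p}) (hinj : Set.InjOn mn X)
    (hb : b = true ↔ Sat V (qex X φ))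
    (H : ∀ Wm : ℕ → Bool, (∀ q ∉ X.image mn, Wm q = V q) →
      ∃ W, (∀ q ∉ Y ∪ X.image mp ∪ {p}, W q = Wm q) ∧ Sat W ψ ∧
        (W p = true ↔ Sat (X.piecewise (W ∘ mp) W) φ) ∧
        ∀ x ∈ X, ¬W p = true → (W (mp x) = true ↔ W (mn x) = true)) :
    ∃ W₀, (∀ q ∉ Y, W₀ q = V q) ∧ Sat (Function.update W₀ p b) ψ := by
  -- Setting `X⁻` to a witness of `∃X φ`, if there is one, forces `p` to be the value of `∃X φ`.
  obtain ⟨u, hu, -⟩ := exists_sat_piecewise_iff (V := V) (X := X) φ V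
  obtain ⟨Wm, hWmu, hWm⟩ := hinj.exists_comp_eq u V
  obtain ⟨W, hW, hψW, hWp, hWmn⟩ := H Wm fun q hq => hWm q (by simpa using hq)
  have hWV (q) (hq : q ∈ φ.freeVars) (hqX : q ∉ X) : W q = V q :=
    (hW q (hφ q hq hqX).1).trans (hWm q (by simpa using (hφ q hq hqX).2))
  have hWb : W p = b := by
    cases hWp' : W p
    · have hφu : ¬Sat (X.piecewise u V) φ := fun h => by
        refine absurd (hWp.mpr ((sat_congr fun q hq => ?_).mp h)) (by simp [hWp'])
        by_cases hqX : q ∈ X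
        · have hWq : W (mp q) = W (mn q) := Bool.eq_iff_iff.mpr (hWmn q hqX (by simp [hWp']))
          simp [hqX, hWq, hW _ (hmn q hqX), hWmu q hqX]
        · simp [hqX, hWV q hq hqX]
      simpa [hu, hφu] using hb
    · refine (hb.mpr (sat_qex_iff.mpr ⟨W ∘ mp, (sat_congr fun q hq => ?_).mp (hWp.mp hWp')⟩)).symm
      by_cases hqX : q ∈ X
      · simp [hqX]
      · simp [hqX, hWV q hq hqX]
  refine ⟨Y.piecewise W V, fun q hq => Y.piecewise_eq_of_notMem _ _ hq,
    (sat_congr fun q hq => ?_).mp hψW⟩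
  obtain ⟨hqmp, hqmn⟩ := hψ q (freeVars_subset_vars ψ hq)
  by_cases hqp : q = p
  · simp [hqp, hWb]
  by_cases hqY : q ∈ Y
  · simp [hqp, hqY]
  · simp [hqp, hqY, hW q (by simp [hqp, hqY, hqmp]), hWm q (by simpa using hqmn)]

theorem prenex_vars_separated (hpφ : p ∉ φ.freeVars) (hY : Y ⊆ ψ.vars \ φ.vars)
    (hfresh : ∀ x ∈ X,
      mp x ∉ ψ.vars ∪ φ.vars ∪ Y ∪ X ∪ {p} ∧ mn x ∉ ψ.vars ∪ φ.vars ∪ Y ∪ X ∪ {p})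
    (hmp_ne_mn : ∀ x ∈ X, ∀ x' ∈ X, mp x ≠ mn x') :
    (∀ q ∈ (qex X φ).freeVars, q ∉ Y) ∧
    (∀ q ∈ φ.freeVars, q ∉ X → q ∉ Y ∪ X.image mp ∪ {p} ∧ q ∉ X.image mn) ∧
    (∀ q ∈ ψ.vars, q ∉ X.image mp ∧ q ∉ X.image mn) ∧
    (∀ x ∈ X, mp x ∉ φ.vars ∧ mp x ∉ Y ∧ mp x ≠ p) ∧
    (∀ x ∈ X, mn x ∉ Y ∪ X.image mp ∪ {p}) := by
  have hYφ (q) (hq : q ∈ Y) : q ∉ φ.vars := (Finset.mem_sdiff.mp (hY hq)).2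
  have hmp (x) (hx : x ∈ X) : mp x ∉ ψ.vars ∧ mp x ∉ φ.vars ∧ mp x ∉ Y ∧ mp x ≠ p := by
    have := (hfresh x hx).1
    simp only [Finset.mem_union, Finset.mem_singleton, not_or] at this
    tauto
  have hmn (x) (hx : x ∈ X) : mn x ∉ ψ.vars ∧ mn x ∉ φ.vars ∧ mn x ∉ Y ∧ mn x ≠ p := by
    have := (hfresh x hx).2
    simp only [Finset.mem_union, Finset.mem_singleton, not_or] at this
    tauto
  simp only [freeVars, Finset.mem_sdiff, Finset.mem_union, Finset.mem_image,
    Finset.mem_singleton, not_or, not_exists, not_and]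
  refine ⟨fun q hq hqY => hYφ q hqY (freeVars_subset_vars φ hq.1), fun q hq _ => ?_,
    fun q hq => ⟨fun x hx h => (hmp x hx).1 (h ▸ hq), fun x hx h => (hmn x hx).1 (h ▸ hq)⟩,
    fun x hx => (hmp x hx).2,
    fun x hx => ⟨⟨(hmn x hx).2.2.1, fun x' hx' => hmp_ne_mn x' hx' x hx⟩, (hmn x hx).2.2.2⟩⟩
  have hqφ := freeVars_subset_vars φ hq
  exact ⟨⟨⟨fun hqY => hYφ q hqY hqφ, fun x hx h => (hmp x hx).2.1 (h ▸ hqφ)⟩,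
    fun h => hpφ (h ▸ hq)⟩, fun x hx h => (hmn x hx).2.1 (h ▸ hqφ)⟩

end Prenex

end Fml

open Fml in
theorem prenex_exists_general (ψ φ : Fml) (p : ℕ) (Y X : Finset ℕ) (mp mn : ℕ → ℕ)
    (hpφ : p ∉ φ.freeVars) (hpscope : OutsideQuantifiers p ψ)
    (hY : Y ⊆ ψ.vars \ φ.vars)
    (hfresh : ∀ x ∈ X,
      mp x ∉ ψ.vars ∪ φ.vars ∪ Y ∪ X ∪ {p} ∧ mn x ∉ ψ.vars ∪ φ.vars ∪ Y ∪ X ∪ {p})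
    (hdist : ∀ x ∈ X, ∀ x' ∈ X, ∀ b b' : Bool,
      (if b then mp x else mn x) = (if b' then mp x' else mn x') → (x, b) = (x', b')) :
    Equiv (qex Y (subst p (qex X φ) ψ))
      (qall (X.image mn) (qex (Y ∪ X.image mp ∪ {p})
        (conj ψ (conj
          (biff (var p) (simSubst (X.toList.map (fun x => (x, var (mp x)))) φ))
          (bigAnd (X.toList.map
            (fun x => imp (neg (var p)) (biff (var (mp x)) (var (mn x)))))))))) := by
  have hinj (b : Bool) : Set.InjOn (fun x => if b then mp x else mn x) X :=
    fun x hx x' hx' h => congrArg Prod.fst (hdist x hx x' hx' b b h)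
  obtain ⟨hYφ, hφ, hψ, hmp, hmn⟩ := prenex_vars_separated hpφ hY hfresh fun x hx x' hx' h => by
    simpa using hdist x hx x' hx' true false (by simpa using h)
  intro V
  obtain ⟨b, hb⟩ : ∃ b : Bool, b = true ↔ Sat V (qex X φ) := by
    classical exact ⟨decide _, decide_eq_true_iff⟩
  rw [sat_qex_subst_iff hpscope hYφ hb]
  simp only [Sat, sat_bigAnd, sat_simSubst_rename_toList fun x hx => (hmp x hx).1,
    List.forall_mem_map, Finset.mem_toList]
  exact ⟨fun ⟨W₀, hW₀, hψW₀⟩ Wm hWm => exists_sat_prenex_body_of_sat_update hφ hψ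
      (fun x hx => (hmp x hx).2) hmn (by simpa using hinj true) hb hW₀ hψW₀ hWm,
    exists_sat_update_of_forall_prenex_body hφ hψ hmn (by simpa using hinj false) hb⟩

open Fml in
/-- prenexing an existential quantifier through an arbitrary
boolean context (Lemma 1, existential case): under the stated freshness and
occurrence conditions,
`∃Y (ψ[p/∃X φ]) ≡
 ∀X⁻ ∃(Y ∪ X⁺ ∪ {p}) (ψ ∧ (p ↔ φ[σ]) ∧ ⋀_{x∈X}(¬p → (x⁺ ↔ x⁻)))`. -/
theorem prenex_exists (ψ φ : Fml) (p : ℕ) (Y X : Finset ℕ) (mp mn : ℕ → ℕ)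
    (hpocc : p ∈ ψ.vars) (hpφ : p ∉ φ.freeVars) (hpscope : OutsideQuantifiers p ψ)
    (hY : Y ⊆ ψ.vars \ φ.vars)
    (hfresh : ∀ x ∈ X,
      mp x ∉ ψ.vars ∪ φ.vars ∪ Y ∪ X ∪ {p} ∧ mn x ∉ ψ.vars ∪ φ.vars ∪ Y ∪ X ∪ {p})
    (hdist : ∀ x ∈ X, ∀ x' ∈ X, ∀ b b' : Bool,
      (if b then mp x else mn x) = (if b' then mp x' else mn x') → (x, b) = (x', b')) :
    Equiv (qex Y (subst p (qex X φ) ψ))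
      (qall (X.image mn) (qex (Y ∪ X.image mp ∪ {p})
        (conj ψ (conj
          (biff (var p) (simSubst (X.toList.map (fun x => (x, var (mp x)))) φ))
          (bigAnd (X.toList.map
            (fun x => imp (neg (var p)) (biff (var (mp x)) (var (mn x)))))))))) :=
  prenex_exists_general ψ φ p Y X mp mn hpφ hpscope hY hfresh hdist
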